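/- Let R : X → X be linear and nonexpansive with V := Fix R a proper closed subspace of X, let β ∈ [0,1], and set T := (1-β)Id + βR. Then κ(T) = β · κ(P_{V⊥} ∘ R restricted to V⊥), where P_{V⊥} is the orthogonal projection onto V⊥ and κ denotes the modulus of averagedness. -/

import Mathlib

/-!
Since `‖R‖ ≤ 1`, every fixed point of `R` is also fixed by `R†`, so `V⊥` is `R`-invariant and
`R` is the orthogonal sum of `Id` on `V` and `S` on `V⊥`. An averaging `S = (1-κ)Id + κM` then
gives `R = (1-κ)Id + κ(P_V ⊕ M P_{V⊥})`, hence `T` is `βκ`-averaged. Conversely, projecting an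
averaging `T = (1-κ)Id + κN` onto `V⊥` shows that `S` is `κ/β`-averaged with the nonexpansive
map `P_{V⊥} N`.
-/

open Set

variable {X : Type*} [NormedAddCommGroup X] [InnerProductSpace ℝ X] [CompleteSpace X]

def Nonexpansive {Y : Type*} [NormedAddCommGroup Y] [InnerProductSpace ℝ Y]
    (T : Y → Y) : Prop := ∀ x y, ‖T x - T y‖ ≤ ‖x - y‖

def IsAveraged {Y : Type*} [NormedAddCommGroup Y] [InnerProductSpace ℝ Y]
    (T : Y → Y) (κ : ℝ) : Prop :=
  ∃ N : Y → Y, Nonexpansive N ∧ ∀ x, T x = (1 - κ) • x + κ • N x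

open RealInnerProductSpace

open scoped InnerProduct

section

variable {Y : Type*} [NormedAddCommGroup Y] [InnerProductSpace ℝ Y]

theorem IsAveraged.underrelax {R : Y → Y} {κ : ℝ} (h : IsAveraged R κ) (β : ℝ) :
    IsAveraged (fun x => (1 - β) • x + β • R x) (β * κ) := by
  obtain ⟨N, hN, hR⟩ := h
  exact ⟨N, hN, fun x => by dsimp only; rw [hR x]; module⟩

theorem Nonexpansive.orthogonalSum (K : Submodule ℝ Y) [K.HasOrthogonalProjection]
    {A : K → K} {B : Kᗮ → Kᗮ} (hA : Nonexpansive A) (hB : Nonexpansive B) :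
    Nonexpansive fun x =>
      (A (K.orthogonalProjectionOnto x) : Y) + B (Kᗮ.orthogonalProjectionOnto x) := by
  intro x y
  set P := K.orthogonalProjectionOnto
  set Q := Kᗮ.orthogonalProjectionOnto
  have hsplit : (A (P x) : Y) + B (Q x) - ((A (P y) : Y) + B (Q y))
      = ((A (P x) - A (P y) : K) : Y) + ((B (Q x) - B (Q y) : Kᗮ) : Y) := by
    push_cast; abel
  have hpyth : ‖((A (P x) - A (P y) : K) : Y) + ((B (Q x) - B (Q y) : Kᗮ) : Y)‖ ^ 2
      = ‖A (P x) - A (P y)‖ ^ 2 + ‖B (Q x) - B (Q y)‖ ^ 2 := by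
    simp only [sq, Submodule.coe_norm]
    exact norm_add_sq_eq_norm_sq_add_norm_sq_real
      (Submodule.inner_right_of_mem_orthogonal (Submodule.coe_mem _) (Submodule.coe_mem _))
  have hxy : ‖x - y‖ ^ 2 = ‖P x - P y‖ ^ 2 + ‖Q x - Q y‖ ^ 2 := by
    simpa only [map_sub] using K.norm_sq_eq_add_norm_sq_projection (x - y)
  refine (pow_le_pow_iff_left₀ (norm_nonneg _) (norm_nonneg _) two_ne_zero).mp ?_
  rw [hsplit, hpyth, hxy]
  gcongr
  exacts [hA _ _, hB _ _]

theorem isAveraged_of_fixed_of_orthogonal (K : Submodule ℝ Y) [K.HasOrthogonalProjection]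
    (R : Y →ₗ[ℝ] Y) (hK : ∀ p ∈ K, R p = p) {S : Kᗮ → Kᗮ} (hS : ∀ v : Kᗮ, R v = S v)
    {κ : ℝ} (h : IsAveraged S κ) : IsAveraged R κ := by
  obtain ⟨M, hM, hSM⟩ := h
  refine ⟨fun x => (K.orthogonalProjectionOnto x : Y) + M (Kᗮ.orthogonalProjectionOnto x),
    Nonexpansive.orthogonalSum K (A := id) (fun _ _ => le_rfl) hM, fun x => ?_⟩
  beta_reduce
  set p := K.orthogonalProjectionOnto x
  set q := Kᗮ.orthogonalProjectionOnto x
  have hx : (p : Y) + q = x := K.starProjection_add_starProjection_orthogonal x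
  rw [← hx, map_add, hK _ p.2, hS, hSM]
  push_cast
  simp only [smul_add, sub_smul, one_smul]
  abel

theorem IsAveraged.of_underrelax (K : Submodule ℝ Y) [K.HasOrthogonalProjection]
    {R : Y → Y} {S : Kᗮ → Kᗮ} (hS : ∀ v : Kᗮ, R v - S v ∈ K) {β κ : ℝ} (hβ : β ≠ 0)
    (h : IsAveraged (fun x => (1 - β) • x + β • R x) κ) : IsAveraged S (κ / β) := by
  obtain ⟨N, hN, hT⟩ := h
  set Q := Kᗮ.orthogonalProjectionOnto
  refine ⟨fun v => Q (N v), fun v w => ?_, fun v => ?_⟩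
  · calc ‖Q (N v) - Q (N w)‖ = ‖Q (N v - N w)‖ := by rw [map_sub]
      _ ≤ ‖N v - N w‖ := Kᗮ.norm_orthogonalProjectionOnto_apply_le _
      _ ≤ ‖v - w‖ := hN v w
  · have hQR : Q (R v) = S v := by
      rw [← sub_eq_zero, ← Kᗮ.orthogonalProjectionOnto_mem_subspace_eq_self (S v), ← map_sub]
      exact Submodule.orthogonalProjectionOnto_orthogonal_apply_eq_zero (hS v)
    have hQv : Q v = v := Kᗮ.orthogonalProjectionOnto_mem_subspace_eq_self v
    have hQT := congrArg Q (hT v)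
    simp only [map_add, map_smul, hQR, hQv] at hQT
    have hβS : β • S v = (β - κ) • v + κ • Q (N v) := by
      linear_combination (norm := module) hQT
    apply smul_right_injective _ hβ
    simp only [hβS]
    match_scalars <;> field_simp

theorem ContinuousLinearMap.adjoint_apply_eq_self_of_apply_eq_self [CompleteSpace Y]
    {R : Y →L[ℝ] Y} (hR : ‖R‖ ≤ 1) {p : Y} (hp : R p = p) : (R†) p = p := by
  have hnorm : ‖(R†) p‖ ≤ ‖p‖ :=
    ((R†).le_of_opNorm_le (by rwa [adjoint.norm_map]) p).trans_eq (one_mul _)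
  have hinner : ⟪(R†) p, p⟫ = ‖p‖ ^ 2 := by
    rw [ContinuousLinearMap.adjoint_inner_left, hp, real_inner_self_eq_norm_sq]
  have hsq : ‖(R†) p - p‖ ^ 2 ≤ 0 := by
    rw [norm_sub_sq_real, hinner]
    nlinarith [norm_nonneg ((R†) p)]
  exact sub_eq_zero.mp (norm_eq_zero.mp (by nlinarith [norm_nonneg ((R†) p - p)]))

theorem ContinuousLinearMap.apply_mem_orthogonal_of_fixed [CompleteSpace Y] {R : Y →L[ℝ] Y}
    (hR : ‖R‖ ≤ 1) {K : Submodule ℝ Y} (hK : ∀ p ∈ K, R p = p) {q : Y} (hq : q ∈ Kᗮ) :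
    R q ∈ Kᗮ := by
  refine (K.mem_orthogonal _).mpr fun u hu => ?_
  rw [← ContinuousLinearMap.adjoint_inner_left, adjoint_apply_eq_self_of_apply_eq_self hR (hK u hu)]
  exact Submodule.inner_right_of_mem_orthogonal hu hq

end

theorem modulus_underrelaxed_general (R : X →L[ℝ] X) (hR : ‖R‖ ≤ 1)
    (V : Submodule ℝ X) (hV : V = LinearMap.ker ((ContinuousLinearMap.id ℝ X - R : X →L[ℝ] X) : X →ₗ[ℝ] X))
    (β : ℝ) (hβ : β ∈ Icc (0 : ℝ) 1)
    (S : Vᗮ → Vᗮ) (hS : ∀ v : Vᗮ, R (v : X) - (S v : X) ∈ V)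
    (κS : ℝ) (hκS : IsLeast {κ : ℝ | κ ∈ Icc (0 : ℝ) 1 ∧ IsAveraged S κ} κS) :
    IsLeast {κ : ℝ | κ ∈ Icc (0 : ℝ) 1 ∧
        IsAveraged (fun x : X => (1 - β) • x + β • R x) κ} (β * κS) := by
  obtain ⟨hβ0, hβ1⟩ := hβ
  obtain ⟨⟨⟨hκS0, hκS1⟩, hSav⟩, hκS_min⟩ := hκS
  have hfix : ∀ p ∈ V, R p = p := fun p hp => by
    rw [hV] at hp
    exact (sub_eq_zero.mp (by simpa using hp)).symm
  have : CompleteSpace V :=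
    (hV ▸ ContinuousLinearMap.isClosed_ker _ : IsClosed (V : Set X)).completeSpace_coe
  have hSR : ∀ v : Vᗮ, R v = S v := fun v => sub_eq_zero.mp <|
    Submodule.disjoint_def.mp V.orthogonal_disjoint _ (hS v)
      (Vᗮ.sub_mem (R.apply_mem_orthogonal_of_fixed hR hfix v.2) (S v).2)
  refine ⟨⟨⟨mul_nonneg hβ0 hκS0, mul_le_one₀ hβ1 hκS0 hκS1⟩,
    (isAveraged_of_fixed_of_orthogonal V R hfix hSR hSav).underrelax β⟩, ?_⟩
  rintro κ ⟨⟨hκ0, -⟩, hTκ⟩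
  rcases hβ0.eq_or_lt with rfl | hβpos
  · simpa using hκ0
  rcases le_or_gt β κ with hβκ | hκβ
  · nlinarith
  have hκS_le : κS ≤ κ / β := hκS_min
    ⟨⟨div_nonneg hκ0 hβ0, (div_le_one hβpos).mpr hκβ.le⟩, hTκ.of_underrelax V hS hβpos.ne'⟩
  calc β * κS ≤ β * (κ / β) := by gcongr
    _ = κ := mul_div_cancel₀ _ hβpos.ne'

/-- If `R` is linear and nonexpansive with fixed point set `V ⊊ X`, `β ∈ [0,1]`, and
`T = (1-β)Id + βR`, then `κ(T) = β·κ(S)` where `S = P_{V⊥} R |_{V⊥}` is characterized by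
`S : V⊥ → V⊥` with `R v - S v ∈ V` for all `v ∈ V⊥`. -/
theorem modulus_underrelaxed (R : X →L[ℝ] X) (hR : ‖R‖ ≤ 1)
    (V : Submodule ℝ X) (hV : V = LinearMap.ker ((ContinuousLinearMap.id ℝ X - R : X →L[ℝ] X) : X →ₗ[ℝ] X))
    (hVne : V ≠ ⊤) (β : ℝ) (hβ : β ∈ Icc (0 : ℝ) 1)
    (S : Vᗮ → Vᗮ) (hS : ∀ v : Vᗮ, R (v : X) - (S v : X) ∈ V)
    (κS : ℝ) (hκS : IsLeast {κ : ℝ | κ ∈ Icc (0 : ℝ) 1 ∧ IsAveraged S κ} κS) :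
    IsLeast {κ : ℝ | κ ∈ Icc (0 : ℝ) 1 ∧
        IsAveraged (fun x : X => (1 - β) • x + β • R x) κ} (β * κS) :=
  modulus_underrelaxed_general R hR V hV β hβ S hS κS hκS
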